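/- arXiv:1904.12598 — 2 statements merged into one kernel-verified Lean document; each statement's English description precedes it below -/
import Mathlib

section
/- Let X be a reflexive Banach space with the non-strict Opial property. Then K^s(X) ≥ √(K(X)), where K(X) := sup{σ ≥ 0 : the closed unit ball of X contains a sequence (x_n) with ‖x_n − x_m‖ ≥ σ for all n ≠ m} and K^s(X) := sup{σ ≥ 0 : the closed unit ball of X contains a sequence (x_n) with ‖x_n − x_m‖ ≥ σ and ‖x_n + x_m‖ ≥ σ for all n ≠ m}. -/
/-!
Pass from a `σ`-separated sequence in the unit ball to a subsequence converging weakly to some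
`x₀` (bounded sets of a reflexive space are relatively weakly compact, and on the closed span of
the sequence countably many functionals separate points, which pins down the limit) along which
`‖xₙ - x₀‖ → d`. The weakly null sequence `zₙ = xₙ - x₀` is still `σ`-separated, so `σ ≤ 2d`,
and the Opial property gives `d ≤ 1` and `liminf ‖zₙ ± v‖ ≥ d` for every `v`.

If `√σ ≤ d`, the Opial bounds make a subsequence of `zₙ / d` almost symmetrically
`1`-separated. Otherwise Ramsey's theorem splits according to the pair sums at level `√σ d`.
If all pair sums are large, `zₙ / d` is symmetrically `√σ`-separated. If all are small, fix a
functional `φ` norming some `z_E` with `‖z_E‖ ≥ σ / 2`: the vectors `(z_E + zₙ) / (√σ d)`, `n`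
large, lie in the unit ball, their differences are at least `σ / (√σ d) ≥ √σ`, and since
`φ zₙ → 0` their sums are almost as large.
-/

open Filter Topology

/-- The Kottman constant `K(X)`. -/
noncomputable def kottmanConst (X : Type*) [NormedAddCommGroup X] [NormedSpace ℝ X] : ℝ :=
  sSup {σ : ℝ | 0 ≤ σ ∧ ∃ x : ℕ → X, (∀ n, ‖x n‖ ≤ 1) ∧
    ∀ n m : ℕ, n ≠ m → σ ≤ ‖x n - x m‖}

/-- The symmetric Kottman constant `K^s(X)`. -/
noncomputable def symKottmanConst (X : Type*) [NormedAddCommGroup X] [NormedSpace ℝ X] : ℝ :=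
  sSup {σ : ℝ | 0 ≤ σ ∧ ∃ x : ℕ → X, (∀ n, ‖x n‖ ≤ 1) ∧
    ∀ n m : ℕ, n ≠ m → σ ≤ ‖x n - x m‖ ∧ σ ≤ ‖x n + x m‖}

/-- `X` has the non-strict Opial property: for every sequence converging weakly to `x`
and every `y`, `liminf ‖xₙ - x‖ ≤ liminf ‖xₙ - y‖`. -/
def NonStrictOpial (X : Type*) [NormedAddCommGroup X] [NormedSpace ℝ X] : Prop :=
  ∀ (x : ℕ → X) (x₀ : X),
    (∀ f : X →L[ℝ] ℝ, Tendsto (fun n => f (x n)) atTop (nhds (f x₀))) →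
    ∀ y : X, liminf (fun n => ‖x n - x₀‖) atTop ≤ liminf (fun n => ‖x n - y‖) atTop

open Set Bornology

theorem exists_strictMono_forall_tendsto {ι : Type*} [Countable ι] (u : ι → ℕ → ℝ)
    (hu : ∀ i, ∃ C, ∀ k, |u i k| ≤ C) :
    ∃ (φ : ℕ → ℕ) (L : ι → ℝ), StrictMono φ ∧
      ∀ i, Tendsto (fun k => u i (φ k)) atTop (𝓝 (L i)) := by
  choose C hC using hu
  obtain ⟨L, -, φ, hφ, hL⟩ := (isCompact_univ_pi fun i => isCompact_Icc).isSeqCompact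
    (x := fun k i => u i k) fun k => mem_univ_pi.2 fun i => abs_le.1 (hC i k)
  exact ⟨φ, L, hφ, tendsto_pi_nhds.1 hL⟩

theorem exists_strictMono_rel_of_forall_eventually {l : Filter ℕ} [l.NeBot] (hl : l ≤ atTop)
    {r : ℕ → ℕ → Prop} {s : Set ℕ} (hs : s ∈ l) (h : ∀ j ∈ s, ∀ᶠ k in l, r j k) :
    ∃ φ : ℕ → ℕ, StrictMono φ ∧ ∀ m n, m < n → r (φ m) (φ n) := by
  obtain ⟨φ, -, hφ⟩ := exists_seq_of_forall_finset_exists (· ∈ s) (fun j k => j < k ∧ r j k)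
    fun t ht => ((eventually_mem_set.2 hs).and ((eventually_all_finset t).2 fun j hj =>
      ((eventually_gt_atTop j).filter_mono hl).and (h j (ht j hj)))).exists
  exact ⟨φ, strictMono_nat_of_lt_succ fun n => (hφ n (n + 1) n.lt_succ_self).1,
    fun m n hmn => (hφ m n hmn).2⟩

theorem exists_strictMono_forall_or_forall_not (r : ℕ → ℕ → Prop) :
    ∃ φ : ℕ → ℕ, StrictMono φ ∧
      ((∀ m n, m < n → r (φ m) (φ n)) ∨ ∀ m n, m < n → ¬ r (φ m) (φ n)) := by
  -- Colour `j` by whether `r j k` holds for `U`-almost all `k`; one colour class lies in `U`.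
  set U := hyperfilter ℕ
  have hU : (U : Filter ℕ) ≤ atTop := Nat.cofinite_eq_atTop ▸ hyperfilter_le_cofinite
  by_cases hs : {j | ∀ᶠ k in U, r j k} ∈ U
  · obtain ⟨φ, hφ, h⟩ := exists_strictMono_rel_of_forall_eventually hU hs fun j hj => hj
    exact ⟨φ, hφ, .inl h⟩
  · have hs' : {j | ∀ᶠ k in U, ¬ r j k} ∈ U := by
      simpa only [Ultrafilter.eventually_not, compl_ofPred] using
        Ultrafilter.compl_mem_iff_notMem.2 hs
    obtain ⟨φ, hφ, h⟩ := exists_strictMono_rel_of_forall_eventually hU hs' fun j hj => hj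
    exact ⟨φ, hφ, .inr h⟩

section

variable {X : Type*} [NormedAddCommGroup X] [NormedSpace ℝ X]

theorem apply_le_norm_of_opNorm_le_one {f : StrongDual ℝ X} (hf : ‖f‖ ≤ 1) (x : X) :
    f x ≤ ‖x‖ :=
  (le_abs_self _).trans ((f.le_of_opNorm_le hf x).trans_eq (one_mul _))

theorem tendsto_toWeakSpace_iff {ι : Type*} {l : Filter ι} {x : ι → X} {x₀ : X} :
    Tendsto (fun i => toWeakSpace ℝ X (x i)) l (𝓝 (toWeakSpace ℝ X x₀)) ↔
      ∀ f : StrongDual ℝ X, Tendsto (fun i => f (x i)) l (𝓝 (f x₀)) := by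
  rw [(⟨rfl⟩ : IsInducing fun (p : WeakSpace ℝ X) (f : StrongDual ℝ X) => f p).tendsto_nhds_iff,
    tendsto_pi_nhds]
  rfl

theorem surjective_inclusionInDoubleDualWeak
    (hrefl : Function.Surjective (NormedSpace.inclusionInDoubleDual ℝ X)) :
    Function.Surjective (NormedSpace.inclusionInDoubleDualWeak ℝ X) := by
  intro Λ
  obtain ⟨x, hx⟩ := hrefl (WeakDual.toStrongDual Λ)
  exact ⟨toWeakSpace ℝ X x, DFunLike.ext _ _ fun f => DFunLike.congr_fun hx f⟩

theorem isCompact_closure_image_toWeakSpace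
    (hrefl : Function.Surjective (NormedSpace.inclusionInDoubleDual ℝ X)) {s : Set X}
    (hs : IsBounded s) : IsCompact (closure (toWeakSpace ℝ X '' s)) :=
  NormedSpace.isCompact_closure_of_isBounded ℝ X _
    (by rwa [preimage_image_eq _ (toWeakSpace ℝ X).injective])
    (by simp [(surjective_inclusionInDoubleDualWeak hrefl).range_eq])

theorem isClosed_image_toWeakSpace {s : Set X} (hs : IsClosed s) (hc : Convex ℝ s) :
    IsClosed (toWeakSpace ℝ X '' s) := by
  rw [← hs.closure_eq, hc.toWeakSpace_closure ℝ]
  exact isClosed_closure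

theorem eq_zero_of_mem_closure_of_forall_norming {c : Set X} {D : X → StrongDual ℝ X}
    (hD : ∀ y, ‖D y‖ ≤ 1) (hDy : ∀ y, D y y = ‖y‖) {z : X} (hz : z ∈ closure c)
    (h : ∀ y ∈ c, D y z = 0) : z = 0 := by
  have key : ∀ y ∈ c, ‖z‖ ≤ 2 * ‖z - y‖ := fun y hy => by
    have : ‖y‖ ≤ ‖z - y‖ :=
      calc ‖y‖ = D y (y - z) := by simp [hDy, h y hy]
        _ ≤ ‖y - z‖ := apply_le_norm_of_opNorm_le_one (hD y) _
        _ = ‖z - y‖ := norm_sub_rev _ _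
    linarith [norm_le_norm_add_norm_sub' z y]
  simpa using closure_minimal (t := {y | ‖z‖ ≤ 2 * ‖z - y‖}) key
    (isClosed_le (by fun_prop) (by fun_prop)) hz

theorem exists_strictMono_weak_tendsto
    (hrefl : Function.Surjective (NormedSpace.inclusionInDoubleDual ℝ X)) {x : ℕ → X}
    (hx : IsBounded (range x)) :
    ∃ (φ : ℕ → ℕ) (x₀ : X), StrictMono φ ∧
      ∀ f : StrongDual ℝ X, Tendsto (fun k => f (x (φ k))) atTop (𝓝 (f x₀)) := by
  set T := toWeakSpace ℝ X
  set Y := (Submodule.span ℝ (range x)).topologicalClosure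
  obtain ⟨c, hc, hYc⟩ : TopologicalSpace.IsSeparable (Y : Set X) :=
    ((countable_range x).isSeparable.span).closure
  have := hc.to_subtype
  choose D hD hDy using fun y : X => exists_dual_vector'' ℝ y
  obtain ⟨R, hR⟩ := isBounded_iff_forall_norm_le.1 hx
  obtain ⟨φ, L, hφ, hL⟩ := exists_strictMono_forall_tendsto (fun (y : c) k => D y (x k))
    fun y => ⟨R, fun k => ((D y).le_of_opNorm_le (hD y) _).trans
      (by simpa using hR _ (mem_range_self k))⟩
  have hcluster : ∀ p, MapClusterPt p atTop (fun k => T (x (φ k))) →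
      T.symm p ∈ Y ∧ ∀ y : c, D y (T.symm p) = L y := by
    intro p hp
    obtain ⟨U, hU, hUp⟩ := mapClusterPt_iff_ultrafilter.1 hp
    rw [← T.apply_symm_apply p] at hUp
    have hUp' := tendsto_toWeakSpace_iff.1 hUp
    refine ⟨?_, fun y => tendsto_nhds_unique (hUp' (D y)) ((hL y).mono_left hU)⟩
    obtain ⟨y, hy, hyp⟩ := (isClosed_image_toWeakSpace
      (Submodule.isClosed_topologicalClosure _) Y.convex).mem_of_tendsto hUp
      (Eventually.of_forall fun k => mem_image_of_mem T
        (Submodule.le_topologicalClosure _ (Submodule.subset_span (mem_range_self _))))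
    exact T.injective hyp ▸ hy
  have hK := isCompact_closure_image_toWeakSpace hrefl hx
  have hmem : ∀ᶠ k in atTop, T (x (φ k)) ∈ closure (T '' range x) :=
    Eventually.of_forall fun k => subset_closure (mem_image_of_mem T (mem_range_self _))
  obtain ⟨p₀, -, hp₀⟩ := hK.exists_mapClusterPt (le_principal_iff.2 hmem)
  refine ⟨φ, T.symm p₀, hφ, tendsto_toWeakSpace_iff.1 ?_⟩
  refine (LinearEquiv.apply_symm_apply T p₀).symm ▸ hK.tendsto_nhds_of_unique_mapClusterPt hmem
    fun p _ hp => ?_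
  obtain ⟨hpY, hpL⟩ := hcluster p hp
  obtain ⟨hp₀Y, hp₀L⟩ := hcluster p₀ hp₀
  have := eq_zero_of_mem_closure_of_forall_norming hD hDy (hYc (Y.sub_mem hpY hp₀Y))
    fun y hy => by rw [map_sub, hpL ⟨y, hy⟩, hp₀L ⟨y, hy⟩, sub_self]
  simpa using T.symm.injective (sub_eq_zero.1 this)

theorem NonStrictOpial.liminf_norm_le_liminf_norm_sub (hopial : NonStrictOpial X) {z : ℕ → X}
    (hz : ∀ f : StrongDual ℝ X, Tendsto (fun k => f (z k)) atTop (𝓝 0)) (v : X) :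
    liminf (fun k => ‖z k‖) atTop ≤ liminf (fun k => ‖z k - v‖) atTop := by
  simpa using hopial z 0 (by simpa using hz) v

theorem symKottmanConst_nonneg : 0 ≤ symKottmanConst X :=
  Real.sSup_nonneg fun _ hσ => hσ.1

theorem le_mul_symKottmanConst {z : ℕ → X} {τ r : ℝ} (hr : 0 < r) (hz : ∀ k, ‖z k‖ ≤ r)
    (hsep : ∀ m n, m < n → τ ≤ ‖z m - z n‖ ∧ τ ≤ ‖z m + z n‖) :
    τ ≤ r * symKottmanConst X := by
  rcases le_or_gt τ 0 with hτ | hτ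
  · exact hτ.trans (mul_nonneg hr.le symKottmanConst_nonneg)
  have hsep' : ∀ m n, m ≠ n → τ ≤ ‖z m - z n‖ ∧ τ ≤ ‖z m + z n‖ := by
    intro m n hmn
    rcases hmn.lt_or_gt with h | h
    · exact hsep m n h
    · rw [norm_sub_rev, add_comm]
      exact hsep n m h
  rw [← div_le_iff₀' hr]
  refine le_csSup ⟨2, ?_⟩ ⟨by positivity, fun k => r⁻¹ • z k, fun k => ?_, fun m n hmn => ?_⟩
  · rintro σ ⟨-, y, hy1, hy⟩
    linarith [(hy 0 1 zero_ne_one).1, norm_sub_le (y 0) (y 1), hy1 0, hy1 1]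
  · rw [norm_smul, norm_inv, Real.norm_of_nonneg hr.le, inv_mul_le_one₀ hr]
    exact hz k
  · rw [← smul_sub, ← smul_add, norm_smul, norm_smul, norm_inv, Real.norm_of_nonneg hr.le,
      ← div_eq_inv_mul, ← div_eq_inv_mul]
    exact ⟨by gcongr; exact (hsep' m n hmn).1, by gcongr; exact (hsep' m n hmn).2⟩

theorem le_mul_symKottmanConst_of_tendsto {z : ℕ → X} {τ d : ℝ}
    (hd : Tendsto (fun k => ‖z k‖) atTop (𝓝 d))
    (hsep : ∀ m n, m < n → τ ≤ ‖z m - z n‖ ∧ τ ≤ ‖z m + z n‖) :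
    τ ≤ d * symKottmanConst X := by
  have hd0 : 0 ≤ d := ge_of_tendsto' hd fun _ => norm_nonneg _
  refine ge_of_tendsto (x := 𝓝[>] d)
    (((continuous_mul_const _).tendsto d).mono_left nhdsWithin_le_nhds) ?_
  filter_upwards [self_mem_nhdsWithin] with r (hr : d < r)
  obtain ⟨N, hN⟩ := eventually_atTop.1 (hd.eventually (ge_mem_nhds hr))
  exact le_mul_symKottmanConst (hd0.trans_lt hr) (fun k => hN (k + N) (by omega))
    fun m n hmn => hsep (m + N) (n + N) (by omega)

theorem one_le_symKottmanConst_of_opial (hopial : NonStrictOpial X) {z : ℕ → X}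
    (hz : ∀ f : StrongDual ℝ X, Tendsto (fun k => f (z k)) atTop (𝓝 0)) {d : ℝ}
    (hd : Tendsto (fun k => ‖z k‖) atTop (𝓝 d)) (hd0 : 0 < d) :
    1 ≤ symKottmanConst X := by
  have hev : ∀ c < d, ∀ v, ∀ᶠ k in atTop, c < ‖z k - v‖ := fun c hc v =>
    eventually_lt_of_lt_liminf (hc.trans_le (hd.liminf_eq ▸
      hopial.liminf_norm_le_liminf_norm_sub hz v)) (isBoundedUnder_of ⟨0, fun _ => norm_nonneg _⟩)
  suffices d ≤ d * symKottmanConst X from (le_mul_iff_one_le_right hd0).1 this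
  refine le_of_forall_lt_imp_le_of_dense fun c hc => ?_
  obtain ⟨φ, hφ, hsep⟩ := exists_strictMono_rel_of_forall_eventually le_rfl univ_mem
    (r := fun j k => c ≤ ‖z j - z k‖ ∧ c ≤ ‖z j + z k‖)
    fun j _ => ((hev c hc (z j)).and (hev c hc (-z j))).mono fun k hk =>
      ⟨norm_sub_rev (z k) (z j) ▸ hk.1.le,
        add_comm (z k) (z j) ▸ sub_neg_eq_add (z k) (z j) ▸ hk.2.le⟩
  exact le_mul_symKottmanConst_of_tendsto (hd.comp hφ.tendsto_atTop) hsep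

theorem le_mul_symKottmanConst_of_norm_add_le {z : ℕ → X}
    (hz : ∀ f : StrongDual ℝ X, Tendsto (fun k => f (z k)) atTop (𝓝 0)) {σ τ : ℝ} (hτ : 0 < τ)
    (hsep : ∀ m n, m < n → σ ≤ ‖z m - z n‖) (hadd : ∀ m n, m < n → ‖z m + z n‖ ≤ τ) :
    σ ≤ τ * symKottmanConst X := by
  obtain ⟨E, hE, hzE⟩ : ∃ E < 2, σ / 2 ≤ ‖z E‖ := by
    by_contra! h
    linarith [hsep 0 1 one_pos, norm_sub_le (z 0) (z 1), h 0 two_pos, h 1 one_lt_two]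
  obtain ⟨φ, hφ, hφE⟩ := exists_dual_vector'' ℝ (z E)
  simp only [RCLike.ofReal_real_eq_id, id_eq] at hφE
  refine le_of_forall_pos_le_add fun ε hε => ?_
  obtain ⟨N, hN⟩ := eventually_atTop.1
    ((hz φ).eventually (lt_mem_nhds (neg_lt_zero.2 (half_pos hε))))
  have := le_mul_symKottmanConst (τ := σ - ε) hτ (z := fun k => z E + z (k + N + 2))
    (fun k => hadd E _ (by omega)) fun m n hmn => ⟨?_, ?_⟩
  · linarith
  · rw [add_sub_add_left_eq_sub]
    linarith [hsep (m + N + 2) (n + N + 2) (by omega)]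
  · refine le_trans ?_ (apply_le_norm_of_opNorm_le_one hφ _)
    simp only [map_add, hφE]
    linarith [hN (m + N + 2) (by omega), hN (n + N + 2) (by omega)]

theorem sqrt_le_symKottmanConst_of_weaklyNull (hopial : NonStrictOpial X) {z : ℕ → X}
    (hz : ∀ f : StrongDual ℝ X, Tendsto (fun k => f (z k)) atTop (𝓝 0)) {d σ : ℝ}
    (hd : Tendsto (fun k => ‖z k‖) atTop (𝓝 d)) (hd1 : d ≤ 1)
    (hsep : ∀ m n, m < n → σ ≤ ‖z m - z n‖) :
    √σ ≤ symKottmanConst X := by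
  rcases le_or_gt σ 0 with hσ | hσ
  · rw [Real.sqrt_eq_zero'.2 hσ]
    exact symKottmanConst_nonneg
  have hσd : σ ≤ d + d := ge_of_tendsto (hd.add (hd.comp (tendsto_add_atTop_nat 1)))
    (Eventually.of_forall fun k => (hsep k (k + 1) k.lt_succ_self).trans (norm_sub_le _ _))
  have hd0 : 0 < d := by linarith
  have hsqrt := Real.sqrt_pos.2 hσ
  have hsqrt_sq := Real.mul_self_sqrt hσ.le
  have hK := symKottmanConst_nonneg (X := X)
  rcases le_or_gt √σ d with hd_large | hd_small
  · exact hd_large.trans (hd1.trans (one_le_symKottmanConst_of_opial hopial hz hd hd0))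
  obtain ⟨φ, hφ, hsums_large | hsums_small⟩ :=
    exists_strictMono_forall_or_forall_not fun m n => √σ * d ≤ ‖z m + z n‖
  · have hle : √σ * d ≤ σ := (mul_le_mul_of_nonneg_left hd_small.le hsqrt.le).trans_eq hsqrt_sq
    have := le_mul_symKottmanConst_of_tendsto (hd.comp hφ.tendsto_atTop) fun m n hmn =>
      ⟨hle.trans (hsep _ _ (hφ hmn)), hsums_large m n hmn⟩
    exact le_of_mul_le_mul_right (this.trans_eq (mul_comm _ _)) hd0
  · have := le_mul_symKottmanConst_of_norm_add_le (fun f => (hz f).comp hφ.tendsto_atTop)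
      (mul_pos hsqrt hd0) (fun m n hmn => hsep _ _ (hφ hmn))
      fun m n hmn => (not_le.1 (hsums_small m n hmn)).le
    have : √σ ≤ d * symKottmanConst X :=
      le_of_mul_le_mul_left (by linarith : √σ * √σ ≤ √σ * (d * symKottmanConst X)) hsqrt
    exact this.trans (mul_le_of_le_one_left hK hd1)

theorem sqrt_le_symKottmanConst_of_separated
    (hrefl : Function.Surjective (NormedSpace.inclusionInDoubleDual ℝ X))
    (hopial : NonStrictOpial X) {x : ℕ → X} {σ : ℝ} (hx : ∀ n, ‖x n‖ ≤ 1)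
    (hsep : ∀ n m : ℕ, n ≠ m → σ ≤ ‖x n - x m‖) :
    √σ ≤ symKottmanConst X := by
  obtain ⟨φ, x₀, hφ, hweak⟩ := exists_strictMono_weak_tendsto hrefl
    (isBounded_iff_forall_norm_le.2 ⟨1, forall_mem_range.2 hx⟩)
  obtain ⟨d, -, ψ, hψ, hd⟩ := tendsto_subseq_of_bounded (x := fun k => ‖x (φ k) - x₀‖)
    (Metric.isBounded_Icc 0 (1 + ‖x₀‖)) fun k =>
      ⟨norm_nonneg _, (norm_sub_le _ _).trans (by linarith [hx (φ k)])⟩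
  have hnull : ∀ f : StrongDual ℝ X, Tendsto (fun k => f (x (φ (ψ k)) - x₀)) atTop (𝓝 0) :=
    fun f => by simpa using ((hweak f).comp hψ.tendsto_atTop).sub_const (f x₀)
  refine sqrt_le_symKottmanConst_of_weaklyNull hopial hnull hd ?_ fun m n hmn => ?_
  · calc d = liminf (fun k => ‖x (φ (ψ k)) - x₀‖) atTop := hd.liminf_eq.symm
      _ ≤ liminf (fun k => ‖x (φ (ψ k)) - x₀ - -x₀‖) atTop :=
        hopial.liminf_norm_le_liminf_norm_sub hnull _
      _ ≤ 1 := liminf_le_of_frequently_le (Frequently.of_forall fun k => by simpa using hx _)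
        (isBoundedUnder_of ⟨0, fun _ => norm_nonneg _⟩)
  · simpa using hsep _ _ ((hφ.comp hψ).injective.ne hmn.ne)

end

theorem symKottman_ge_sqrt_kottman_of_reflexive_opial_general (X : Type*) [NormedAddCommGroup X]
    [NormedSpace ℝ X]
    (hrefl : Function.Surjective (NormedSpace.inclusionInDoubleDual ℝ X))
    (hopial : NonStrictOpial X) :
    Real.sqrt (kottmanConst X) ≤ symKottmanConst X := by
  rw [Real.sqrt_le_iff]
  refine ⟨symKottmanConst_nonneg, csSup_le ⟨0, le_rfl, 0, by simp, by simp⟩ ?_⟩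
  rintro σ ⟨hσ, x, hx, hsep⟩
  calc σ = √σ ^ 2 := (Real.sq_sqrt hσ).symm
    _ ≤ symKottmanConst X ^ 2 := by
      gcongr
      exact sqrt_le_symKottmanConst_of_separated hrefl hopial hx hsep

/-- **Corollary 2.2.** For a reflexive Banach space `X` with the non-strict Opial
property, `K^s(X) ≥ √(K(X))`. Reflexivity is expressed as surjectivity of the
canonical embedding of `X` into its bidual. -/
theorem symKottman_ge_sqrt_kottman_of_reflexive_opial (X : Type*) [NormedAddCommGroup X]
    [NormedSpace ℝ X] [CompleteSpace X]
    (hrefl : Function.Surjective (NormedSpace.inclusionInDoubleDual ℝ X))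
    (hopial : NonStrictOpial X) :
    Real.sqrt (kottmanConst X) ≤ symKottmanConst X :=
  symKottman_ge_sqrt_kottman_of_reflexive_opial_general X hrefl hopial
end

section
/- Let X be a Banach space admitting a suppression 1-unconditional Schauder basis (e_j)_{j=1}^∞; that is, every x ∈ X has a unique norm-convergent expansion x = Σ_{j=1}^∞ a_j e_j, and for every finitely supported scalar sequence (α_j) and every finite set A ⊆ ℕ one has ‖Σ_{j∈A} α_j e_j‖ ≤ ‖Σ_{j=1}^∞ α_j e_j‖. Then K^s(X) ≥ √(K(X)). -/
/-!
Given a `σ`-separated sequence in the unit ball and `1 ≤ s` with `s² < σ`, we build a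
symmetrically `s`-separated one; this gives `K(X) ≤ K^s(X)²`, as `K^s(X) ≥ 1` always holds
here. Approximate the terms by finitely supported vectors and pass to a subsequence whose
coefficients converge coordinatewise, to `a` say.

If the partial sums of `∑ a j e j` are Cauchy, a gliding hump leaves disjointly supported blocks
`R i`, still almost `σ`-separated, with norms close to some `β`. Either some `R j` has
`‖R j + R i‖ < sβ` for infinitely many `i`, and then the normalised `R j + R i` work: their sums
contain `2 R j`, and their differences are at least `σ / (sβ) ≥ s`. Or all pairwise sums are
eventually large, and the normalised `R i` work.

Otherwise the finite subsums of `∑ a j e j` are bounded but the series is not Cauchy. Taking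
`μ₀ = inf_k sup ‖∑_{j ∈ F} ±a j e j‖` over finite `F ⊆ [k, ∞)`, disjoint signed subsums of norm
close to `μ₀` behave like the unit vector basis of `c₀`, which is symmetrically `s`-separated for
every `s < 2`.
-/

open Filter Topology

/-- `e` is a Schauder basis of `X`: every `x ∈ X` has a unique expansion
`x = Σ_{j} a j • e j` with norm-convergent partial sums. -/
def IsSchauderBasis {X : Type*} [NormedAddCommGroup X] [NormedSpace ℝ X] (e : ℕ → X) : Prop :=
  ∀ x : X, ∃! a : ℕ → ℝ,
    Tendsto (fun N => ∑ j ∈ Finset.range N, a j • e j) atTop (nhds x)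

/-- `e` is suppression `1`-unconditional: deleting coefficients from a finitely supported
linear combination never increases the norm. -/
def SuppressionOneUnconditional {X : Type*} [NormedAddCommGroup X] [NormedSpace ℝ X]
    (e : ℕ → X) : Prop :=
  ∀ (α : ℕ →₀ ℝ) (A : Finset ℕ),
    ‖∑ j ∈ A, α j • e j‖ ≤ ‖∑ j ∈ α.support, α j • e j‖

open Finset Function

def signPatterns (k : ℕ) : Set (ℕ →₀ ℝ) :=
  {c | (∀ j, c j ∈ ({-1, 0, 1} : Set ℝ)) ∧ ∀ j ∈ c.support, k ≤ j}

theorem neg_mem_signPatterns {k : ℕ} {c : ℕ →₀ ℝ} (hc : c ∈ signPatterns k) :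
    -c ∈ signPatterns k := by
  refine ⟨fun j => ?_, fun j hj => hc.2 j (by simpa using hj)⟩
  have h := hc.1 j
  simp only [Set.mem_insert_iff, Set.mem_singleton_iff, Finsupp.neg_apply] at h ⊢
  rcases h with h | h | h <;> simp [h]

theorem single_mem_signPatterns {k j : ℕ} (hj : k ≤ j) : Finsupp.single j 1 ∈ signPatterns k :=
  ⟨fun i => by by_cases h : j = i <;> simp [h],
    fun i hi => by rwa [Finset.mem_singleton.mp (Finsupp.support_single_subset hi)]⟩

theorem sum_mem_signPatterns {k : ℕ} {F : Finset ℕ} {c : ℕ → ℕ →₀ ℝ}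
    (hc : ∀ ℓ ∈ F, c ℓ ∈ signPatterns k)
    (hdisj : (F : Set ℕ).PairwiseDisjoint fun ℓ => (c ℓ).support) :
    ∑ ℓ ∈ F, c ℓ ∈ signPatterns k := by
  classical
  have hval : ∀ j, (∑ ℓ ∈ F, c ℓ) j = 0 ∨ ∃ ℓ ∈ F, (∑ ℓ ∈ F, c ℓ) j = c ℓ j := by
    intro j
    rw [Finsupp.finsetSum_apply]
    by_cases h : ∃ ℓ ∈ F, j ∈ (c ℓ).support
    · obtain ⟨ℓ, hℓ, hj⟩ := h
      refine Or.inr ⟨ℓ, hℓ, Finset.sum_eq_single_of_mem ℓ hℓ fun ℓ' hℓ' hne => ?_⟩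
      exact Finsupp.notMem_support_iff.mp fun hj' =>
        Finset.disjoint_left.mp (hdisj hℓ' hℓ hne) hj' hj
    · push Not at h
      exact Or.inl (Finset.sum_eq_zero fun ℓ hℓ => Finsupp.notMem_support_iff.mp (h ℓ hℓ))
  refine ⟨fun j => ?_, fun j hj => ?_⟩
  · rcases hval j with h | ⟨ℓ, hℓ, h⟩
    · simp [h]
    · exact h ▸ (hc ℓ hℓ).1 j
  · rcases hval j with h | ⟨ℓ, hℓ, h⟩
    · exact absurd h (Finsupp.mem_support_iff.mp hj)
    · exact (hc ℓ hℓ).2 j (Finsupp.mem_support_iff.mpr (h ▸ Finsupp.mem_support_iff.mp hj))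

theorem exists_pairwise_disjoint_support {M : Type*} [Zero M] {P : (ℕ →₀ M) → Prop}
    (h : ∀ b, ∃ c : ℕ →₀ M, (∀ j ∈ c.support, b ≤ j) ∧ P c) :
    ∃ c : ℕ → ℕ →₀ M, Pairwise (Disjoint on fun ℓ => (c ℓ).support) ∧ ∀ ℓ, P (c ℓ) := by
  have : Std.Symm fun c d : ℕ →₀ M => Disjoint c.support d.support := ⟨fun _ _ h => h.symm⟩
  obtain ⟨c, hP, hdisj⟩ := exists_seq_of_forall_finset_exists' P
    (fun c d : ℕ →₀ M => Disjoint c.support d.support) fun F _ => by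
      obtain ⟨d, hd, hP⟩ := h (F.sup (fun c => c.support.sup id) + 1)
      refine ⟨d, hP, fun c hc => Finset.disjoint_left.mpr fun j hjc hjd => ?_⟩
      have h1 : j ≤ F.sup fun c => c.support.sup id :=
        (Finset.le_sup (f := id) hjc).trans (Finset.le_sup (f := fun c => c.support.sup id) hc)
      have := hd j hjd
      omega
  exact ⟨c, hdisj, hP⟩

section

variable {X : Type*} [NormedAddCommGroup X]

def SymmSeparated (s : ℝ) (y : ℕ → X) : Prop :=
  ∀ n m, n ≠ m → s ≤ ‖y n - y m‖ ∧ s ≤ ‖y n + y m‖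

theorem SymmSeparated.of_lt {s : ℝ} {y : ℕ → X}
    (h : ∀ n m, m < n → s ≤ ‖y n - y m‖ ∧ s ≤ ‖y n + y m‖) : SymmSeparated s y := by
  intro n m hnm
  rcases hnm.lt_or_gt with hlt | hlt
  · rw [norm_sub_rev, add_comm]
    exact h m n hlt
  · exact h n m hlt

variable [NormedSpace ℝ X]

theorem norm_inv_norm_smul_le_one (x : X) : ‖‖x‖⁻¹ • x‖ ≤ 1 := by
  simpa only [norm_smul, norm_inv, norm_norm] using inv_mul_le_one_of_le₀ le_rfl (norm_nonneg x)

theorem norm_add_le_norm_smul_add {u v : X} {t : ℝ} (ht : 1 ≤ t) (hv : ‖v‖ ≤ ‖t • u + v‖) :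
    ‖u + v‖ ≤ ‖t • u + v‖ := by
  have ht0 : 0 < t := one_pos.trans_le ht
  have hconv : u + v = t⁻¹ • (t • u + v) + (1 - t⁻¹) • v := by
    rw [smul_add, smul_smul, inv_mul_cancel₀ ht0.ne', one_smul, sub_smul, one_smul]
    abel
  have ht1 : 0 ≤ 1 - t⁻¹ := sub_nonneg.mpr (inv_le_one_of_one_le₀ ht)
  calc ‖u + v‖ ≤ t⁻¹ * ‖t • u + v‖ + (1 - t⁻¹) * ‖v‖ := by
        rw [hconv]
        refine (norm_add_le _ _).trans_eq ?_
        rw [norm_smul, norm_smul, Real.norm_of_nonneg (inv_nonneg.mpr ht0.le),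
          Real.norm_of_nonneg ht1]
    _ ≤ t⁻¹ * ‖t • u + v‖ + (1 - t⁻¹) * ‖t • u + v‖ := by gcongr
    _ = ‖t • u + v‖ := by ring

theorem norm_linearCombination_le_of_mem_signPatterns {u : ℕ → X} {C : ℝ}
    (hC : ∀ T : Finset ℕ, ‖∑ j ∈ T, u j‖ ≤ C) {k : ℕ} {c : ℕ →₀ ℝ} (hc : c ∈ signPatterns k) :
    ‖Finsupp.linearCombination ℝ u c‖ ≤ 2 * C := by
  classical
  set P := c.support.filter (fun j => c j = 1)
  set N := c.support.filter (fun j => ¬c j = 1)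
  have hP : ∑ j ∈ P, c j • u j = ∑ j ∈ P, u j :=
    Finset.sum_congr rfl fun j hj => by rw [(Finset.mem_filter.mp hj).2, one_smul]
  have hN : ∑ j ∈ N, c j • u j = -∑ j ∈ N, u j := by
    rw [← Finset.sum_neg_distrib]
    refine Finset.sum_congr rfl fun j hj => ?_
    rw [Finset.mem_filter, Finsupp.mem_support_iff] at hj
    rcases hc.1 j with h | h | h
    · rw [h, neg_one_smul]
    · exact absurd h hj.1
    · exact absurd h hj.2
  rw [Finsupp.linearCombination_apply, Finsupp.sum,
    ← Finset.sum_filter_add_sum_filter_not c.support (fun j => c j = 1), hP, hN,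
    ← sub_eq_add_neg, two_mul]
  exact (norm_sub_le _ _).trans (add_le_add (hC _) (hC _))

theorem exists_mem_signPatterns_le_norm {u : ℕ → X}
    (hu : ¬ CauchySeq fun n => ∑ j ∈ range n, u j) :
    ∃ ε > 0, ∀ k, ∃ c ∈ signPatterns k, ε ≤ ‖Finsupp.linearCombination ℝ u c‖ := by
  rw [Metric.cauchySeq_iff'] at hu
  push Not at hu
  obtain ⟨ε, hε, hk⟩ := hu
  refine ⟨ε, hε, fun k => ?_⟩
  obtain ⟨n, hkn, hn⟩ := hk k
  refine ⟨∑ j ∈ Ico k n, Finsupp.single j 1,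
    sum_mem_signPatterns (fun j hj => single_mem_signPatterns (mem_Ico.mp hj).1) ?_, ?_⟩
  · intro i _ j _ hij
    exact Finset.disjoint_of_subset_left Finsupp.support_single_subset
      (Finset.disjoint_of_subset_right Finsupp.support_single_subset
        (Finset.disjoint_singleton.mpr hij))
  · simpa [map_sum, Finsupp.linearCombination_single, dist_eq_norm,
      ← Finset.sum_Ico_eq_sub _ hkn] using hn

theorem linearCombination_eq_sum_range_add_sum {e : ℕ → X} (c : ℕ →₀ ℝ) (M : ℕ) :
    Finsupp.linearCombination ℝ e c
      = ∑ j ∈ range M, c j • e j + ∑ j ∈ c.support.filter (M ≤ ·), c j • e j := by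
  classical
  rw [Finsupp.linearCombination_apply, Finsupp.sum,
    ← Finset.sum_filter_add_sum_filter_not c.support (· < M)]
  simp only [not_lt]
  congr 1
  refine Finset.sum_subset (fun j hj => mem_range.mpr (Finset.mem_filter.mp hj).2)
    fun j hj hj' => ?_
  have : j ∉ c.support := fun h => hj' (Finset.mem_filter.mpr ⟨h, mem_range.mp hj⟩)
  rw [Finsupp.notMem_support_iff.mp this, zero_smul]

/-- Gliding hump: cut each `c (t i)` at some `M i`; the heads all approximate the same Cauchy
partial sums of `∑ a j • e j`, while the tails, supported on the `A i`, are disjoint. -/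
theorem exists_disjoint_tails {e : ℕ → X} {c : ℕ → ℕ →₀ ℝ} {a : ℕ → ℝ}
    (hca : ∀ j, Tendsto (fun n => c n j) atTop (𝓝 (a j)))
    (hcauchy : CauchySeq fun M => ∑ j ∈ range M, a j • e j) {ε : ℝ} (hε : 0 < ε) :
    ∃ (t : ℕ → ℕ) (A : ℕ → Finset ℕ), StrictMono t ∧ Pairwise (Disjoint on A) ∧
      ∀ i k, ‖Finsupp.linearCombination ℝ e (c (t i)) - Finsupp.linearCombination ℝ e (c (t k))‖
        ≤ ‖∑ j ∈ A i, c (t i) j • e j - ∑ j ∈ A k, c (t k) j • e j‖ + ε := by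
  classical
  set SP : ℕ → X := fun M => ∑ j ∈ range M, a j • e j
  set head : ℕ → ℕ → X := fun M n => ∑ j ∈ range M, c n j • e j
  obtain ⟨K, hK⟩ := Metric.cauchySeq_iff.mp hcauchy (ε / 3) (by positivity)
  have hhead : ∀ M, ∀ᶠ n in atTop, dist (head M n) (SP M) < ε / 3 := fun M =>
    (tendsto_finsetSum _ fun j _ => (hca j).smul_const (e j)).eventually
      (Metric.ball_mem_nhds _ (by positivity))
  obtain ⟨f, hfP, hfr⟩ := exists_seq_of_forall_finset_exists
    (fun p : ℕ × ℕ => K ≤ p.1 ∧ dist (head p.1 p.2) (SP p.1) < ε / 3)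
    (fun p q => p.2 < q.2 ∧ ∀ j ∈ (c p.2).support, j < q.1) fun F _ => by
      set M := max K (F.sup (fun p => (c p.2).support.sup id) + 1)
      obtain ⟨n, hn⟩ := ((hhead M).and ((eventually_all_finset F).mpr fun p _ =>
        eventually_gt_atTop p.2)).exists
      refine ⟨(M, n), ⟨le_max_left _ _, hn.1⟩, fun p hp => ⟨hn.2 p hp, fun j hj => ?_⟩⟩
      have := (Finset.le_sup (f := id) hj).trans
        (Finset.le_sup (f := fun p => (c p.2).support.sup id) hp)
      simp only [id] at this
      omega
  set M : ℕ → ℕ := fun i => (f i).1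
  set t : ℕ → ℕ := fun i => (f i).2
  refine ⟨t, fun i => (c (t i)).support.filter (M i ≤ ·), fun i k hik => (hfr i k hik).1,
    fun i k hik => ?_, fun i k => ?_⟩
  · wlog hlt : i < k generalizing i k
    · exact (this k i hik.symm (hik.lt_or_gt.resolve_left hlt)).symm
    refine Finset.disjoint_left.mpr fun j hji hjk => ?_
    have h1 : j < M k := (hfr i k hlt).2 j (Finset.mem_filter.mp hji).1
    have h2 : M k ≤ j := (Finset.mem_filter.mp hjk).2
    omega
  · rw [linearCombination_eq_sum_range_add_sum _ (M i),
      linearCombination_eq_sum_range_add_sum _ (M k)]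
    have hheads : dist (head (M i) (t i)) (head (M k) (t k)) ≤ ε := by
      have := dist_triangle4 (head (M i) (t i)) (SP (M i)) (SP (M k)) (head (M k) (t k))
      rw [dist_comm (SP (M k))] at this
      linarith [(hfP i).2, (hfP k).2, hK _ (hfP i).1 _ (hfP k).1]
    rw [dist_eq_norm] at hheads
    calc _ = ‖(head (M i) (t i) - head (M k) (t k))
            + (∑ j ∈ (c (t i)).support.filter (M i ≤ ·), c (t i) j • e j
              - ∑ j ∈ (c (t k)).support.filter (M k ≤ ·), c (t k) j • e j)‖ := by
          congr 1; abel
      _ ≤ _ := (norm_add_le _ _).trans (by linarith)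

namespace IsSchauderBasis

variable {e : ℕ → X}

theorem ne_zero (hb : IsSchauderBasis e) (j : ℕ) : e j ≠ 0 := by
  intro hj
  have hzero : ∀ a : ℕ → ℝ, (∀ i, i ≠ j → a i = 0) →
      Tendsto (fun N => ∑ i ∈ range N, a i • e i) atTop (𝓝 0) := fun a ha => by
    refine tendsto_const_nhds.congr fun N => (Finset.sum_eq_zero fun i _ => ?_).symm
    by_cases hij : i = j
    · rw [hij, hj, smul_zero]
    · rw [ha i hij, zero_smul]
  have := (hb 0).unique (hzero (Pi.single j 1) fun i hi => Pi.single_eq_of_ne hi _)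
    (hzero 0 fun _ _ => rfl)
  simpa using congrFun this j

theorem exists_finsupp_norm_sub_lt (hb : IsSchauderBasis e) (x : X) {ε : ℝ} (hε : 0 < ε) :
    ∃ c : ℕ →₀ ℝ, ‖x - Finsupp.linearCombination ℝ e c‖ < ε := by
  obtain ⟨a, ha, -⟩ := hb x
  obtain ⟨N, hN⟩ := Metric.tendsto_atTop.mp ha ε hε
  have hspan : ∑ j ∈ range N, a j • e j ∈ Submodule.span ℝ (Set.range e) :=
    Submodule.sum_mem _ fun j _ => Submodule.smul_mem _ _ (Submodule.subset_span ⟨j, rfl⟩)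
  obtain ⟨c, hc⟩ := Finsupp.mem_span_range_iff_exists_finsupp.mp hspan
  refine ⟨c, ?_⟩
  rw [Finsupp.linearCombination_apply, hc, ← dist_eq_norm, dist_comm]
  exact hN N le_rfl

end IsSchauderBasis

namespace SuppressionOneUnconditional

variable {e : ℕ → X}

theorem norm_sum_le_norm_sum (hs : SuppressionOneUnconditional e) {c : ℕ → ℝ} {B : Finset ℕ}
    (hc : ∀ j ∉ B, c j = 0) (A : Finset ℕ) : ‖∑ j ∈ A, c j • e j‖ ≤ ‖∑ j ∈ B, c j • e j‖ := by
  let α : ℕ →₀ ℝ := Finsupp.onFinset B c fun j hj => not_imp_comm.mp (hc j) hj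
  have hB : ∑ j ∈ α.support, α j • e j = ∑ j ∈ B, c j • e j :=
    Finset.sum_subset Finsupp.support_onFinset_subset fun j _ hj => by
      rw [Finsupp.notMem_support_iff.mp hj, zero_smul]
  have := hs α A
  rwa [hB] at this

theorem norm_sum_le_norm_linearCombination (hs : SuppressionOneUnconditional e) (c : ℕ →₀ ℝ)
    (A : Finset ℕ) : ‖∑ j ∈ A, c j • e j‖ ≤ ‖Finsupp.linearCombination ℝ e c‖ := by
  rw [Finsupp.linearCombination_apply, Finsupp.sum]
  exact hs c A

theorem smul (hs : SuppressionOneUnconditional e) (a : ℕ → ℝ) :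
    SuppressionOneUnconditional fun j => a j • e j := fun α A => by
  simp only [smul_smul]
  exact hs.norm_sum_le_norm_sum (fun j hj => by rw [Finsupp.notMem_support_iff.mp hj, zero_mul]) A

theorem norm_le_norm_add (hs : SuppressionOneUnconditional e) {A B : Set ℕ} (hAB : Disjoint A B)
    {u v : X} (hu : u ∈ Submodule.span ℝ (e '' A)) (hv : v ∈ Submodule.span ℝ (e '' B)) :
    ‖u‖ ≤ ‖u + v‖ := by
  obtain ⟨f, hfA, rfl⟩ := Finsupp.mem_span_image_iff_linearCombination ℝ |>.mp hu
  obtain ⟨g, hgB, rfl⟩ := Finsupp.mem_span_image_iff_linearCombination ℝ |>.mp hv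
  have hg : ∀ j ∈ f.support, g j = 0 := fun j hj =>
    Finsupp.notMem_support_iff.mp fun hj' => hAB.ne_of_mem (hfA hj) (hgB hj') rfl
  have hu : Finsupp.linearCombination ℝ e f = ∑ j ∈ f.support, (f + g) j • e j := by
    rw [Finsupp.linearCombination_apply, Finsupp.sum]
    exact Finset.sum_congr rfl fun j hj => by simp [hg j hj]
  rw [← map_add, hu, Finsupp.linearCombination_apply, Finsupp.sum]
  exact hs.norm_sum_le_norm_sum (fun j hj => Finsupp.notMem_support_iff.mp hj) _

theorem norm_le_of_sub_mem (hs : SuppressionOneUnconditional e) {A : Set ℕ} {u v : X}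
    (hu : u ∈ Submodule.span ℝ (e '' A)) (hvu : v - u ∈ Submodule.span ℝ (e '' Aᶜ)) :
    ‖u‖ ≤ ‖v‖ := by
  simpa using hs.norm_le_norm_add disjoint_compl_right hu hvu

theorem norm_add_le_norm_smul_add_smul (hs : SuppressionOneUnconditional e) {A B : Set ℕ}
    (hAB : Disjoint A B) {u v : X} (hu : u ∈ Submodule.span ℝ (e '' A))
    (hv : v ∈ Submodule.span ℝ (e '' B)) {a b : ℝ} (ha : 1 ≤ a) (hb : 1 ≤ b) :
    ‖u + v‖ ≤ ‖a • u + b • v‖ := by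
  have hu' : a • u ∈ Submodule.span ℝ (e '' A) := Submodule.smul_mem _ a hu
  calc ‖u + v‖ ≤ ‖a • u + v‖ :=
        norm_add_le_norm_smul_add ha (add_comm v (a • u) ▸ hs.norm_le_norm_add hAB.symm hv hu')
    _ = ‖v + a • u‖ := by rw [add_comm]
    _ ≤ ‖b • v + a • u‖ := norm_add_le_norm_smul_add hb
        (add_comm (a • u) (b • v) ▸ hs.norm_le_norm_add hAB hu' (Submodule.smul_mem _ b hv))
    _ = ‖a • u + b • v‖ := by rw [add_comm]

theorem div_le_norm_inv_smul_add_inv_smul (hs : SuppressionOneUnconditional e) {A B : Set ℕ}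
    (hAB : Disjoint A B) {u v : X} (hu : u ∈ Submodule.span ℝ (e '' A))
    (hv : v ∈ Submodule.span ℝ (e '' B)) {a b q : ℝ} (ha : 0 < a) (hb : 0 < b) (haq : a ≤ q)
    (hbq : b ≤ q) : ‖u + v‖ / q ≤ ‖a⁻¹ • u + b⁻¹ • v‖ := by
  have hq : 0 < q := ha.trans_le haq
  have key : a⁻¹ • u + b⁻¹ • v = q⁻¹ • ((q / a) • u + (q / b) • v) := by
    simp only [smul_add, smul_smul]
    congr 2 <;> field_simp
  rw [key, norm_smul, Real.norm_eq_abs, abs_of_pos (inv_pos.mpr hq), div_eq_inv_mul]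
  gcongr
  exact hs.norm_add_le_norm_smul_add_smul hAB hu hv ((one_le_div ha).mpr haq)
    ((one_le_div hb).mpr hbq)

theorem symmSeparated_one (hs : SuppressionOneUnconditional e) (he : ∀ j, e j ≠ 0) :
    SymmSeparated 1 fun j => ‖e j‖⁻¹ • e j := by
  have hmem : ∀ j (t : ℝ), t • e j ∈ Submodule.span ℝ (e '' {j}) := fun j t =>
    Submodule.smul_mem _ t (Submodule.subset_span (Set.mem_image_of_mem e rfl))
  intro n m hnm
  have hdisj : Disjoint ({n} : Set ℕ) {m} := Set.disjoint_singleton.mpr hnm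
  have hn : ‖‖e n‖⁻¹ • e n‖ = 1 := by
    rw [norm_smul, norm_inv, norm_norm, inv_mul_cancel₀ (norm_ne_zero_iff.mpr (he n))]
  rw [sub_eq_add_neg, ← neg_smul]
  exact ⟨hn ▸ hs.norm_le_norm_add hdisj (hmem n _) (hmem m _),
    hn ▸ hs.norm_le_norm_add hdisj (hmem n _) (hmem m _)⟩

theorem symmSeparated_normalize (hs : SuppressionOneUnconditional e) {S : ℕ → Set ℕ}
    (hS : Pairwise (Disjoint on S)) {R : ℕ → X} (hR : ∀ i, R i ∈ Submodule.span ℝ (e '' S i))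
    (hR0 : ∀ i, R i ≠ 0) {q s : ℝ} (hRq : ∀ i, ‖R i‖ ≤ q) (hsep : SymmSeparated (s * q) R) :
    SymmSeparated s fun i => ‖R i‖⁻¹ • R i := by
  intro n m hnm
  have hpos : ∀ i, 0 < ‖R i‖ := fun i => norm_pos_iff.mpr (hR0 i)
  have hq : 0 < q := (hpos 0).trans_le (hRq 0)
  have key : ∀ v ∈ Submodule.span ℝ (e '' S m), ‖v‖ = ‖R m‖ →
      s ≤ ‖R n + v‖ / q → s ≤ ‖‖R n‖⁻¹ • R n + ‖v‖⁻¹ • v‖ := fun v hv hvm h =>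
    h.trans (hs.div_le_norm_inv_smul_add_inv_smul (hS hnm) (hR n) hv (hpos n)
      (hvm ▸ hpos m) (hRq n) (hvm ▸ hRq m))
  have hsep' := hsep n m hnm
  constructor
  · have := key (-R m) (Submodule.neg_mem _ (hR m)) (norm_neg _)
      ((le_div_iff₀ hq).mpr (by rw [← sub_eq_add_neg]; exact hsep'.1))
    rwa [norm_neg, smul_neg, ← sub_eq_add_neg] at this
  · exact key (R m) (hR m) rfl ((le_div_iff₀ hq).mpr hsep'.2)

theorem symmSeparated_normalize_add (hs : SuppressionOneUnconditional e) {S : ℕ → Set ℕ}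
    (hS : Pairwise (Disjoint on S)) {R : ℕ → X} (hR : ∀ i, R i ∈ Submodule.span ℝ (e '' S i))
    {S₀ : Set ℕ} (hS₀ : ∀ i, Disjoint S₀ (S i)) {z : X} (hz : z ∈ Submodule.span ℝ (e '' S₀))
    (hz0 : z ≠ 0) {D s : ℝ} (hzD : ∀ i, ‖z + R i‖ ≤ D) (hD : s * D ≤ 2 * ‖z‖)
    (hsep : ∀ i k, i ≠ k → s * D ≤ ‖R i - R k‖) :
    SymmSeparated s fun i => ‖z + R i‖⁻¹ • (z + R i) := by
  set Λ : ℕ → ℝ := fun i => ‖z + R i‖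
  have hzΛ : ∀ i, ‖z‖ ≤ Λ i := fun i => hs.norm_le_norm_add (hS₀ i) hz (hR i)
  have hΛ : ∀ i, 0 < Λ i := fun i => (norm_pos_iff.mpr hz0).trans_le (hzΛ i)
  have hDpos : 0 < D := (hΛ 0).trans_le (hzD 0)
  intro n m hnm
  have hpair : Disjoint (S n ∪ S m) S₀ :=
    Disjoint.union_left (hS₀ n).symm (hS₀ m).symm
  have hmem : ∀ a b : ℝ, a • R n + b • R m ∈ Submodule.span ℝ (e '' (S n ∪ S m)) := fun a b =>
    Submodule.add_mem _
      (Submodule.smul_mem _ a (Submodule.span_mono (Set.image_mono Set.subset_union_left) (hR n)))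
      (Submodule.smul_mem _ b (Submodule.span_mono (Set.image_mono Set.subset_union_right) (hR m)))
  constructor
  · have hdecomp : (Λ n)⁻¹ • (z + R n) - (Λ m)⁻¹ • (z + R m)
        = ((Λ n)⁻¹ • R n + (-(Λ m)⁻¹) • R m) + ((Λ n)⁻¹ - (Λ m)⁻¹) • z := by module
    have hproj := hs.norm_le_norm_add hpair (hmem ((Λ n)⁻¹) (-(Λ m)⁻¹))
      (Submodule.smul_mem _ ((Λ n)⁻¹ - (Λ m)⁻¹) hz)
    have hdiv := hs.div_le_norm_inv_smul_add_inv_smul (hS hnm) (hR n)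
      (Submodule.neg_mem _ (hR m)) (hΛ n) (hΛ m) (hzD n) (hzD m)
    rw [← sub_eq_add_neg, smul_neg, ← neg_smul] at hdiv
    rw [← hdecomp] at hproj
    calc s ≤ ‖R n - R m‖ / D := (le_div_iff₀ hDpos).mpr (hsep n m hnm)
      _ ≤ _ := hdiv.trans hproj
  · have hdecomp : (Λ n)⁻¹ • (z + R n) + (Λ m)⁻¹ • (z + R m)
        = ((Λ n)⁻¹ + (Λ m)⁻¹) • z + ((Λ n)⁻¹ • R n + (Λ m)⁻¹ • R m) := by module
    have hproj := hs.norm_le_norm_add hpair.symm (Submodule.smul_mem _ ((Λ n)⁻¹ + (Λ m)⁻¹) hz)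
      (hmem ((Λ n)⁻¹) ((Λ m)⁻¹))
    rw [← hdecomp, norm_smul, Real.norm_of_nonneg (by positivity [hΛ n, hΛ m])] at hproj
    refine le_trans ?_ hproj
    have hinv : ∀ i, D⁻¹ ≤ (Λ i)⁻¹ := fun i => inv_anti₀ (hΛ i) (hzD i)
    calc s ≤ 2 * ‖z‖ / D := (le_div_iff₀ hDpos).mpr hD
      _ = (D⁻¹ + D⁻¹) * ‖z‖ := by ring
      _ ≤ ((Λ n)⁻¹ + (Λ m)⁻¹) * ‖z‖ :=
        mul_le_mul_of_nonneg_right (add_le_add (hinv n) (hinv m)) (norm_nonneg z)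

theorem exists_symmSeparated_of_blocks_norm_mem_Icc (hs : SuppressionOneUnconditional e)
    {S : ℕ → Set ℕ} (hS : Pairwise (Disjoint on S)) {R : ℕ → X}
    (hR : ∀ i, R i ∈ Submodule.span ℝ (e '' S i)) {p q s : ℝ} (hp : 0 < p)
    (hRpq : ∀ i, ‖R i‖ ∈ Set.Icc p q) (hs1 : 1 ≤ s) (hpq : s ^ 2 * q ≤ 2 * p)
    (hsep : ∀ i k, i ≠ k → s ^ 2 * q ≤ ‖R i - R k‖) :
    ∃ y : ℕ → X, (∀ n, ‖y n‖ ≤ 1) ∧ SymmSeparated s y := by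
  have hR0 : ∀ i, R i ≠ 0 := fun i => norm_pos_iff.mp (hp.trans_le (hRpq i).1)
  have hsq : s * (s * q) = s ^ 2 * q := by ring
  by_cases hbad : ∃ j, ∃ᶠ i in atTop, ‖R j + R i‖ < s * q
  · obtain ⟨j, hj⟩ := hbad
    obtain ⟨θ, hθ, hθj⟩ := extraction_of_frequently_atTop
      (hj.and_eventually (eventually_ne_atTop j))
    refine ⟨_, fun n => norm_inv_norm_smul_le_one _,
      hs.symmSeparated_normalize_add (hS.comp_of_injective hθ.injective) (fun i => hR (θ i))
        (fun i => hS (hθj i).2.symm) (hR j) (hR0 j) (fun i => (hθj i).1.le) ?_ ?_⟩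
    · rw [hsq]; exact hpq.trans (by gcongr; exact (hRpq j).1)
    · intro i k hik
      rw [hsq]
      exact hsep _ _ (hθ.injective.ne hik)
  · push Not at hbad
    obtain ⟨f, -, hf⟩ := exists_seq_of_forall_finset_exists (fun _ => True)
      (fun i k => i < k ∧ s * q ≤ ‖R i + R k‖) fun F _ =>
        (((eventually_all_finset F).mpr fun j _ => (eventually_gt_atTop j).and (hbad j)).exists).imp
          fun k hk => ⟨trivial, hk⟩
    have hf_mono : StrictMono f := fun m n hmn => (hf m n hmn).1
    refine ⟨_, fun n => norm_inv_norm_smul_le_one _,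
      hs.symmSeparated_normalize (hS.comp_of_injective hf_mono.injective) (fun i => hR (f i))
        (fun i => hR0 (f i)) (fun i => (hRpq (f i)).2)
        (SymmSeparated.of_lt fun n m hmn => ⟨?_, ?_⟩)⟩
    · have hq : 0 ≤ q := (norm_nonneg _).trans (hRpq 0).2
      calc s * q ≤ s ^ 2 * q := by gcongr; nlinarith
        _ ≤ _ := hsep _ _ (hf_mono.injective.ne hmn.ne')
    · rw [add_comm]
      exact (hf m n hmn).2

theorem exists_symmSeparated_of_separated_blocks (hs : SuppressionOneUnconditional e)
    {S : ℕ → Set ℕ} (hS : Pairwise (Disjoint on S)) {R : ℕ → X}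
    (hR : ∀ i, R i ∈ Submodule.span ℝ (e '' S i)) {b σ s : ℝ} (hRb : ∀ i, ‖R i‖ ≤ b)
    (hsep : ∀ i k, i ≠ k → σ ≤ ‖R i - R k‖) (hs1 : 1 ≤ s) (hs2 : s ^ 2 < 2)
    (hσ : s ^ 2 * b < σ) : ∃ y : ℕ → X, (∀ n, ‖y n‖ ≤ 1) ∧ SymmSeparated s y := by
  have hb : 0 ≤ b := (norm_nonneg _).trans (hRb 0)
  have hRσ : ∀ i, ‖R i‖ ∈ Set.Icc (σ - b) b := fun i => ⟨by
    linarith [hsep i (i + 1) (by omega), norm_sub_le (R i) (R (i + 1)), hRb (i + 1)], hRb i⟩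
  obtain ⟨β, ⟨hβσ, hβb⟩, ψ, hψ, hψβ⟩ := isCompact_Icc.tendsto_subseq hRσ
  have hβ : 0 < β := by nlinarith [le_mul_of_one_le_left hb (one_le_pow₀ hs1 : 1 ≤ s ^ 2)]
  set ε := min ((σ - s ^ 2 * β) / s ^ 2) ((2 - s ^ 2) * β / (2 + s ^ 2))
  have hε : 0 < ε := lt_min (by apply div_pos <;> nlinarith) (by apply div_pos <;> nlinarith)
  have hεσ : s ^ 2 * (β + ε) ≤ σ := by
    have := (le_div_iff₀ (by nlinarith)).mp (min_le_left _ _ : ε ≤ _)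
    nlinarith
  have hε2 : s ^ 2 * (β + ε) ≤ 2 * (β - ε) := by
    have := (le_div_iff₀ (by nlinarith)).mp (min_le_right _ _ : ε ≤ _)
    nlinarith
  obtain ⟨I, hI⟩ := eventually_atTop.mp
    (hψβ.eventually (Icc_mem_nhds (sub_lt_self β hε) (lt_add_of_pos_right β hε)))
  have hρ : StrictMono fun i => ψ (i + I) := hψ.comp (strictMono_id.add_const I)
  exact hs.exists_symmSeparated_of_blocks_norm_mem_Icc (hS.comp_of_injective hρ.injective)
    (fun i => hR _) (by nlinarith [mul_pos (by positivity : 0 < s ^ 2) (add_pos hβ hε)])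
    (fun i => hI _ (by omega)) hs1 hε2 fun i k hik => hεσ.trans (hsep _ _ (hρ.injective.ne hik))

/-- The vectors `w n = z (n + 1) - ∑_{ℓ ≤ n} z ℓ` mimic `e_{n+1} - ∑_{ℓ ≤ n} e_ℓ` in `c₀`: for
`m < n`, the normalised `w n - w m` has coefficient `-(‖w n‖⁻¹ + ‖w m‖⁻¹)` on the block
`z (m + 1)`, and the normalised `w n + w m` has the same coefficient on `z 0`. -/
theorem exists_symmSeparated_of_c0_blocks (hs : SuppressionOneUnconditional e)
    {T : ℕ → Set ℕ} (hT : Pairwise (Disjoint on T)) {z : ℕ → X}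
    (hz : ∀ ℓ, z ℓ ∈ Submodule.span ℝ (e '' T ℓ)) {lo hi : ℝ} (hlo : 0 < lo)
    (hzlo : ∀ ℓ, lo ≤ ‖z ℓ‖) (hhi : ∀ n, ‖z (n + 1) - ∑ ℓ ∈ range (n + 1), z ℓ‖ ≤ hi) :
    ∃ y : ℕ → X, (∀ n, ‖y n‖ ≤ 1) ∧ SymmSeparated (2 * lo / hi) y := by
  classical
  set w : ℕ → X := fun n => z (n + 1) - ∑ ℓ ∈ range (n + 1), z ℓ with hw
  have hzV : ∀ ℓ k, ℓ ≠ k → z ℓ ∈ Submodule.span ℝ (e '' (T k)ᶜ) := fun ℓ k h =>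
    Submodule.span_mono (Set.image_mono (hT h).subset_compl_right) (hz ℓ)
  have hsumV : ∀ (F : Finset ℕ) k, k ∉ F → ∑ ℓ ∈ F, z ℓ ∈ Submodule.span ℝ (e '' (T k)ᶜ) :=
    fun F k hk => Submodule.sum_mem _ fun ℓ hℓ => hzV ℓ k (ne_of_mem_of_not_mem hℓ hk)
  have hw_add : ∀ n k, k ≤ n → w n + z k ∈ Submodule.span ℝ (e '' (T k)ᶜ) := by
    intro n k hk
    have hmem : k ∈ range (n + 1) := mem_range.mpr (by omega)
    have : w n + z k = z (n + 1) - ∑ ℓ ∈ (range (n + 1)).erase k, z ℓ := by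
      show z (n + 1) - ∑ ℓ ∈ range (n + 1), z ℓ + z k = _
      rw [← add_sum_erase _ _ hmem]; abel
    rw [this]
    exact Submodule.sub_mem _ (hzV _ _ (by omega)) (hsumV _ _ (notMem_erase k _))
  have hw_sub : ∀ n, w n - z (n + 1) ∈ Submodule.span ℝ (e '' (T (n + 1))ᶜ) := fun n => by
    simpa [hw] using Submodule.neg_mem _ (hsumV (range (n + 1)) (n + 1) (by simp))
  set Λ : ℕ → ℝ := fun n => ‖w n‖
  have hΛlo : ∀ n, lo ≤ Λ n := fun n => (hzlo 0).trans <| by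
    simpa using hs.norm_le_of_sub_mem (Submodule.neg_mem _ (hz 0))
      (by simpa using hw_add n 0 n.zero_le)
  have hΛ : ∀ n, 0 < Λ n := fun n => hlo.trans_le (hΛlo n)
  have hhi0 : 0 < hi := (hΛ 0).trans_le (hhi 0)
  have hcoef : ∀ n m k, 2 * lo / hi ≤ ‖((Λ n)⁻¹ + (Λ m)⁻¹) • z k‖ := fun n m k => by
    rw [norm_smul, Real.norm_of_nonneg (by positivity [hΛ n, hΛ m])]
    calc 2 * lo / hi = (hi⁻¹ + hi⁻¹) * lo := by ring
      _ ≤ ((Λ n)⁻¹ + (Λ m)⁻¹) * ‖z k‖ :=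
        mul_le_mul (add_le_add (inv_anti₀ (hΛ n) (hhi n)) (inv_anti₀ (hΛ m) (hhi m))) (hzlo k)
          hlo.le (by positivity [hΛ n, hΛ m])
  refine ⟨fun n => (Λ n)⁻¹ • w n, fun n => norm_inv_norm_smul_le_one _,
    SymmSeparated.of_lt fun n m hmn => ⟨?_, ?_⟩⟩
  · refine (hcoef n m (m + 1)).trans (norm_neg (_ : X) ▸ hs.norm_le_of_sub_mem
      (Submodule.neg_mem _ (Submodule.smul_mem _ _ (hz (m + 1)))) ?_)
    convert Submodule.sub_mem _ (Submodule.smul_mem _ (Λ n)⁻¹ (hw_add n (m + 1) hmn))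
      (Submodule.smul_mem _ (Λ m)⁻¹ (hw_sub m)) using 1
    module
  · refine (hcoef n m 0).trans (norm_neg (_ : X) ▸ hs.norm_le_of_sub_mem
      (Submodule.neg_mem _ (Submodule.smul_mem _ _ (hz 0))) ?_)
    convert Submodule.add_mem _ (Submodule.smul_mem _ (Λ n)⁻¹ (hw_add n 0 n.zero_le))
      (Submodule.smul_mem _ (Λ m)⁻¹ (hw_add m 0 m.zero_le)) using 1
    module

theorem exists_symmSeparated_of_not_cauchySeq {u : ℕ → X} (hu : SuppressionOneUnconditional u)
    {C : ℝ} (hC : ∀ T : Finset ℕ, ‖∑ j ∈ T, u j‖ ≤ C)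
    (hnc : ¬ CauchySeq fun n => ∑ j ∈ range n, u j) {s : ℝ} (hs0 : 0 < s) (hs2 : s < 2) :
    ∃ y : ℕ → X, (∀ n, ‖y n‖ ≤ 1) ∧ SymmSeparated s y := by
  classical
  set L := Finsupp.linearCombination ℝ u
  obtain ⟨ε₀, hε₀, hbig⟩ := exists_mem_signPatterns_le_norm hnc
  -- Sign combinations beyond `k₀` have norm `< μ₀ + ε`, and we pick disjoint ones of norm
  -- `> μ₀ - ε`: a near-isometric copy of the `c₀` basis.
  set μ : ℕ → ℝ := fun k => sSup ((fun c => ‖L c‖) '' signPatterns k)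
  have hbdd : ∀ k, BddAbove ((fun c => ‖L c‖) '' signPatterns k) := fun k =>
    ⟨2 * C, Set.forall_mem_image.mpr fun _ hc =>
      norm_linearCombination_le_of_mem_signPatterns hC hc⟩
  have hle_μ : ∀ k, ∀ c ∈ signPatterns k, ‖L c‖ ≤ μ k := fun k c hc =>
    le_csSup (hbdd k) (Set.mem_image_of_mem _ hc)
  have hε₀μ : ∀ k, ε₀ ≤ μ k := fun k => by
    obtain ⟨c, hc, hcε⟩ := hbig k
    exact hcε.trans (hle_μ k c hc)
  set μ₀ := ⨅ k, μ k
  have hμ₀_le : ∀ k, μ₀ ≤ μ k := ciInf_le ⟨ε₀, Set.forall_mem_range.mpr hε₀μ⟩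
  have hμ₀ : 0 < μ₀ := hε₀.trans_le (le_ciInf hε₀μ)
  set ε := μ₀ * (2 - s) / (2 + s)
  have hε : 0 < ε := by apply div_pos <;> nlinarith
  have hεs : ε * (2 + s) = μ₀ * (2 - s) := div_mul_cancel₀ _ (by positivity)
  have hεμ : ε < μ₀ := by nlinarith
  have hs_eq : 2 * (μ₀ - ε) / (μ₀ + ε) = s := by
    rw [div_eq_iff (by positivity)]
    linarith
  obtain ⟨k₀, hk₀⟩ := exists_lt_of_ciInf_lt (lt_add_of_pos_right μ₀ hε)
  obtain ⟨c, hdisj, hc⟩ := exists_pairwise_disjoint_support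
    (P := fun c => c ∈ signPatterns k₀ ∧ μ₀ - ε < ‖L c‖) fun b => by
      obtain ⟨_, ⟨c, hc, rfl⟩, hcμ⟩ := exists_lt_of_lt_csSup
        ((Set.nonempty_of_mem (hbig (max k₀ b)).choose_spec.1).image _)
        ((sub_lt_self μ₀ hε).trans_le (hμ₀_le (max k₀ b)))
      exact ⟨c, fun j hj => (le_max_right _ _).trans (hc.2 j hj),
        ⟨hc.1, fun j hj => (le_max_left _ _).trans (hc.2 j hj)⟩, hcμ⟩
  have hz : ∀ ℓ, L (c ℓ) ∈ Submodule.span ℝ (u '' ((c ℓ).support : Set ℕ)) := fun ℓ =>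
    Finsupp.mem_span_image_iff_linearCombination ℝ |>.mpr
      ⟨c ℓ, Finsupp.mem_supported_support ℝ _, rfl⟩
  have hhi : ∀ n, ‖L (c (n + 1)) - ∑ ℓ ∈ range (n + 1), L (c ℓ)‖ ≤ μ₀ + ε := fun n => by
    set c' : ℕ → ℕ →₀ ℝ := fun ℓ => if ℓ = n + 1 then c ℓ else -c ℓ
    have hsum : c (n + 1) - ∑ ℓ ∈ range (n + 1), c ℓ = ∑ ℓ ∈ range (n + 2), c' ℓ := by
      rw [Finset.sum_range_succ c' (n + 1),
        Finset.sum_congr rfl fun ℓ hℓ => (if_neg (mem_range.mp hℓ).ne : c' ℓ = -c ℓ),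
        show c' (n + 1) = c (n + 1) from if_pos rfl, Finset.sum_neg_distrib]
      abel
    have hc' : ∑ ℓ ∈ range (n + 2), c' ℓ ∈ signPatterns k₀ := by
      refine sum_mem_signPatterns (fun ℓ _ => ?_) fun ℓ _ ℓ' _ h => ?_
      · by_cases h : ℓ = n + 1
        · simpa [c', h] using (hc ℓ).1
        · simpa [c', h] using neg_mem_signPatterns (hc ℓ).1
      · have := hdisj h
        simp only [c', onFun] at this ⊢
        split_ifs <;> simpa using this
    rw [← map_sum, ← map_sub, hsum]
    exact (hle_μ k₀ _ hc').trans hk₀.le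
  obtain ⟨y, hy1, hy⟩ := hu.exists_symmSeparated_of_c0_blocks
    (fun ℓ ℓ' h => Finset.disjoint_coe.mpr (hdisj h)) hz (sub_pos.mpr hεμ)
    (fun ℓ => (hc ℓ).2.le) hhi
  exact ⟨y, hy1, hs_eq ▸ hy⟩

theorem exists_subseq_tendsto_coeff (hs : SuppressionOneUnconditional e) (he : ∀ j, e j ≠ 0)
    {c : ℕ → ℕ →₀ ℝ} {b : ℝ} (hcb : ∀ n, ‖Finsupp.linearCombination ℝ e (c n)‖ ≤ b) :
    ∃ φ : ℕ → ℕ, StrictMono φ ∧ ∃ a : ℕ → ℝ,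
      ∀ j, Tendsto (fun n => c (φ n) j) atTop (𝓝 (a j)) := by
  have hmem : ∀ n, ⇑(c n) ∈ Set.univ.pi fun j => Set.Icc (-(b / ‖e j‖)) (b / ‖e j‖) :=
    fun n j _ => by
      rw [Set.mem_Icc, ← abs_le, le_div_iff₀ (norm_pos_iff.mpr (he j)), ← Real.norm_eq_abs,
        ← norm_smul]
      simpa using (hs.norm_sum_le_norm_linearCombination (c n) {j}).trans (hcb n)
  obtain ⟨a, -, φ, hφ, hlim⟩ := (isCompact_univ_pi fun j => isCompact_Icc).tendsto_subseq hmem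
  exact ⟨φ, hφ, a, tendsto_pi_nhds.mp hlim⟩

theorem exists_symmSeparated_of_tendsto_coeff_of_cauchySeq (hs : SuppressionOneUnconditional e)
    {c : ℕ → ℕ →₀ ℝ} {a : ℕ → ℝ} (hca : ∀ j, Tendsto (fun n => c n j) atTop (𝓝 (a j)))
    (hcauchy : CauchySeq fun M => ∑ j ∈ range M, a j • e j) {b σ s : ℝ}
    (hcb : ∀ n, ‖Finsupp.linearCombination ℝ e (c n)‖ ≤ b)
    (hsep : ∀ n m, n ≠ m →
      σ ≤ ‖Finsupp.linearCombination ℝ e (c n) - Finsupp.linearCombination ℝ e (c m)‖)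
    (hs1 : 1 ≤ s) (hs2 : s ^ 2 < 2) (hσ : s ^ 2 * b < σ) :
    ∃ y : ℕ → X, (∀ n, ‖y n‖ ≤ 1) ∧ SymmSeparated s y := by
  set ε := (σ - s ^ 2 * b) / 2 with hε
  obtain ⟨t, A, ht, hA, htail⟩ := exists_disjoint_tails hca hcauchy (by positivity : 0 < ε)
  refine hs.exists_symmSeparated_of_separated_blocks (S := fun i => A i)
    (R := fun i => ∑ j ∈ A i, c (t i) j • e j)
    (fun i k hik => Finset.disjoint_coe.mpr (hA hik))
    (fun i => Submodule.sum_mem _ fun j hj =>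
      Submodule.smul_mem _ _ (Submodule.subset_span (Set.mem_image_of_mem e hj)))
    (fun i => (hs.norm_sum_le_norm_linearCombination _ _).trans (hcb _))
    (fun i k hik => ?_) hs1 hs2 (by linarith : s ^ 2 * b < σ - ε)
  linarith [hsep _ _ (ht.injective.ne hik), htail i k]

theorem exists_symmSeparated_of_tendsto_coeff_of_not_cauchySeq
    (hs : SuppressionOneUnconditional e)
    {c : ℕ → ℕ →₀ ℝ} {a : ℕ → ℝ} (hca : ∀ j, Tendsto (fun n => c n j) atTop (𝓝 (a j)))
    (hnc : ¬ CauchySeq fun M => ∑ j ∈ range M, a j • e j) {b s : ℝ}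
    (hcb : ∀ n, ‖Finsupp.linearCombination ℝ e (c n)‖ ≤ b) (hs0 : 0 < s) (hs2 : s < 2) :
    ∃ y : ℕ → X, (∀ n, ‖y n‖ ≤ 1) ∧ SymmSeparated s y := by
  have hC : ∀ T : Finset ℕ, ‖∑ j ∈ T, a j • e j‖ ≤ b := fun T =>
    le_of_tendsto (tendsto_finsetSum _ fun j _ => (hca j).smul_const (e j)).norm
      (Eventually.of_forall fun n => (hs.norm_sum_le_norm_linearCombination _ _).trans (hcb n))
  exact (hs.smul a).exists_symmSeparated_of_not_cauchySeq hC hnc hs0 hs2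

theorem exists_symmSeparated_of_separated (hs : SuppressionOneUnconditional e)
    (hb : IsSchauderBasis e) {x : ℕ → X} (hx : ∀ n, ‖x n‖ ≤ 1) {σ : ℝ}
    (hsep : ∀ n m, n ≠ m → σ ≤ ‖x n - x m‖) {s : ℝ} (hs1 : 1 ≤ s) (hsσ : s ^ 2 < σ) :
    ∃ y : ℕ → X, (∀ n, ‖y n‖ ≤ 1) ∧ SymmSeparated s y := by
  set L := Finsupp.linearCombination ℝ e
  have hσ2 : σ ≤ 2 := by linarith [hsep 0 1 zero_ne_one, norm_sub_le (x 0) (x 1), hx 0, hx 1]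
  set δ := (σ - s ^ 2) / 5 with hδ
  have hδ0 : 0 < δ := by linarith
  choose c hc using fun n => hb.exists_finsupp_norm_sub_lt (x n) hδ0
  have hcb : ∀ n, ‖L (c n)‖ ≤ 1 + δ := fun n => by
    linarith [norm_sub_norm_le (L (c n)) (x n), norm_sub_rev (L (c n)) (x n), hc n, hx n]
  have hcsep : ∀ n m, n ≠ m → σ - 2 * δ ≤ ‖L (c n) - L (c m)‖ := fun n m hnm => by
    have := dist_triangle4 (x n) (L (c n)) (L (c m)) (x m)
    rw [dist_eq_norm, dist_eq_norm, dist_eq_norm, dist_eq_norm, norm_sub_rev (L (c m))] at this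
    linarith [hsep n m hnm, hc n, hc m]
  obtain ⟨φ, hφ, a, hca⟩ := hs.exists_subseq_tendsto_coeff hb.ne_zero hcb
  by_cases hcauchy : CauchySeq fun M => ∑ j ∈ range M, a j • e j
  · exact hs.exists_symmSeparated_of_tendsto_coeff_of_cauchySeq hca hcauchy (fun n => hcb (φ n))
      (fun n m h => hcsep _ _ (hφ.injective.ne h)) hs1 (by linarith) (by nlinarith)
  · exact hs.exists_symmSeparated_of_tendsto_coeff_of_not_cauchySeq hca hcauchy
      (fun n => hcb (φ n)) (by linarith) (by nlinarith)

end SuppressionOneUnconditional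

theorem le_symKottmanConst {s : ℝ} (hs0 : 0 ≤ s) {y : ℕ → X} (hy1 : ∀ n, ‖y n‖ ≤ 1)
    (hy : SymmSeparated s y) : s ≤ symKottmanConst X := by
  refine le_csSup ⟨2, fun σ ⟨_, z, hz1, hz⟩ => ?_⟩ ⟨hs0, y, hy1, hy⟩
  linarith [(hz 0 1 zero_ne_one).1, norm_sub_le (z 0) (z 1), hz1 0, hz1 1]

theorem one_le_symKottmanConst {e : ℕ → X} (hb : IsSchauderBasis e)
    (hs : SuppressionOneUnconditional e) : 1 ≤ symKottmanConst X :=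
  le_symKottmanConst zero_le_one (fun _ => norm_inv_norm_smul_le_one _)
    (hs.symmSeparated_one hb.ne_zero)

theorem kottmanConst_le_sq_symKottmanConst {e : ℕ → X} (hb : IsSchauderBasis e)
    (hs : SuppressionOneUnconditional e) : kottmanConst X ≤ symKottmanConst X ^ 2 := by
  have hK1 := one_le_symKottmanConst hb hs
  refine Real.sSup_le (fun σ ⟨_, x, hx, hsep⟩ => ?_) (by positivity)
  by_contra! hlt
  have hK : symKottmanConst X < √σ := (Real.lt_sqrt (by linarith)).mpr hlt
  set s := (symKottmanConst X + √σ) / 2 with hs_def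
  obtain ⟨y, hy1, hy⟩ := hs.exists_symmSeparated_of_separated hb hx hsep (s := s)
    (by linarith) ((Real.lt_sqrt (by linarith)).mp (by linarith))
  linarith [le_symKottmanConst (by linarith : 0 ≤ s) hy1 hy]

end

theorem symKottman_ge_sqrt_kottman_of_suppression_basis_general (X : Type*) [NormedAddCommGroup X]
    [NormedSpace ℝ X] (e : ℕ → X)
    (hbasis : IsSchauderBasis e) (hsupp : SuppressionOneUnconditional e) :
    Real.sqrt (kottmanConst X) ≤ symKottmanConst X :=
  Real.sqrt_le_iff.mpr ⟨zero_le_one.trans (one_le_symKottmanConst hbasis hsupp),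
    kottmanConst_le_sq_symKottmanConst hbasis hsupp⟩

/-- **Corollary 2.3.** If a Banach space `X` admits a suppression `1`-unconditional
Schauder basis, then `K^s(X) ≥ √(K(X))`. -/
theorem symKottman_ge_sqrt_kottman_of_suppression_basis (X : Type*) [NormedAddCommGroup X]
    [NormedSpace ℝ X] [CompleteSpace X] (e : ℕ → X)
    (hbasis : IsSchauderBasis e) (hsupp : SuppressionOneUnconditional e) :
    Real.sqrt (kottmanConst X) ≤ symKottmanConst X :=
  symKottman_ge_sqrt_kottman_of_suppression_basis_general X e hbasis hsupp
end
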